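/- Let K be a field of characteristic zero, let G be an abelian group, let g be a finite-dimensional Lie algebra over K, and let (B, η) be a universal coacting bialgebra of g. For bialgebra homomorphisms Φ, Φ' : B → K[G], let (g_σ^Φ)_{σ ∈ G} and (g_σ^{Φ'})_{σ ∈ G} be the corresponding G-gradings, where g_σ^Φ = { x ∈ g | (Φ ⊗ id_g)(η(x)) = σ ⊗ x }. Then the two gradings are isomorphic — i.e., there exists a Lie algebra automorphism φ of g with φ(g_σ^Φ) = g_σ^{Φ'} for all σ ∈ G — if and only if Φ and Φ' are conjugate: there exists a convolution-invertible K-algebra homomorphism u : B → K, with convolution inverse u⁻¹, such that Φ'(b) = Σ u(b₍₁₎) Φ(b₍₂₎) u⁻¹(b₍₃₎) in K[G] for all b ∈ B (viewing the scalars u(b₍₁₎), u⁻¹(b₍₃₎) in K[G] via the unit K → K[G], with Δ_B(b) expanded twice in Sweedler notation). -/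

import Mathlib

/-!
Statement 11: Let `G` be an abelian group, `g` a finite-dimensional Lie algebra over a field
`K` of characteristic zero, and `(B, η)` a universal coacting bialgebra of `g`. Two bialgebra
homomorphisms `Φ, Φ' : B → K[G]` induce isomorphic `G`-gradings of `g` (i.e. some Lie algebra
automorphism `φ` of `g` maps `g_σ^Φ` onto `g_σ^{Φ'}` for every `σ`) if and only if `Φ` and
`Φ'` are conjugate: `Φ'(b) = Σ u(b₍₁₎) Φ(b₍₂₎) u⁻¹(b₍₃₎)` for some convolution-invertible
`K`-algebra homomorphism `u : B → K` with convolution inverse `u⁻¹`.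
-/

open TensorProduct

universe u

/-- The base-change Lie bracket on `A ⊗[K] g` is `K`-bilinear, so `A ⊗[K] g` is a Lie algebra
over `K` (and not merely over `A`). -/
noncomputable instance baseChangeLieAlgebra {K : Type u} [Field K]
    {A : Type u} [CommRing A] [Algebra K A]
    {L : Type u} [LieRing L] [LieAlgebra K L] : LieAlgebra K (A ⊗[K] L) :=
  { (inferInstance : Module K (A ⊗[K] L)) with
    lie_smul := fun t x y => by
      rw [← algebraMap_smul A t y, lie_smul, algebraMap_smul] }

/-- `(A, η)` is a universal pair for `(g, h)`. -/
def IsUniversalLiePair (K : Type u) [Field K]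
    (g : Type u) [LieRing g] [LieAlgebra K g]
    (h : Type u) [LieRing h] [LieAlgebra K h]
    (A : Type u) [CommRing A] [Algebra K A]
    (η : h →ₗ⁅K⁆ A ⊗[K] g) : Prop :=
  ∀ (C : Type u) [CommRing C] [Algebra K C], ∀ f : h →ₗ⁅K⁆ C ⊗[K] g,
    ∃! Φ : A →ₐ[K] C, ∀ x : h, f x = LinearMap.rTensor g Φ.toLinearMap (η x)

/-- A coaction of a commutative `K`-bialgebra `B` on the Lie algebra `g`. -/
def IsLieCoaction (K : Type u) [Field K]
    (g : Type u) [LieRing g] [LieAlgebra K g]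
    (B : Type u) [CommRing B] [Bialgebra K B]
    (η : g →ₗ⁅K⁆ B ⊗[K] g) : Prop :=
  (∀ x : g, TensorProduct.lid K g
      (LinearMap.rTensor g (Coalgebra.counit (R := K) (A := B)) (η x)) = x) ∧
  ∀ x : g, LinearMap.rTensor g (Coalgebra.comul (R := K) (A := B)) (η x) =
    (TensorProduct.assoc K B B g).symm (LinearMap.lTensor B η.toLinearMap (η x))

/-- The diagonal group-like map `σ ↦ σ ⊗ σ` on the group algebra. -/
noncomputable def diagMonoidHom (K : Type u) [Field K] (G : Type u) [CommGroup G] :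
    G →* MonoidAlgebra K G ⊗[K] MonoidAlgebra K G where
  toFun σ := MonoidAlgebra.of K G σ ⊗ₜ[K] MonoidAlgebra.of K G σ
  map_one' := by
    show MonoidAlgebra.of K G 1 ⊗ₜ[K] MonoidAlgebra.of K G 1 = 1
    rw [map_one, Algebra.TensorProduct.one_def]
  map_mul' σ τ := by
    show MonoidAlgebra.of K G (σ * τ) ⊗ₜ[K] MonoidAlgebra.of K G (σ * τ)
      = (MonoidAlgebra.of K G σ ⊗ₜ[K] MonoidAlgebra.of K G σ) *
        (MonoidAlgebra.of K G τ ⊗ₜ[K] MonoidAlgebra.of K G τ)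
    rw [map_mul, Algebra.TensorProduct.tmul_mul_tmul]

/-- The standard comultiplication of the group algebra `K[G]`. -/
noncomputable def groupComul (K : Type u) [Field K] (G : Type u) [CommGroup G] :
    MonoidAlgebra K G →ₗ[K] MonoidAlgebra K G ⊗[K] MonoidAlgebra K G :=
  (MonoidAlgebra.lift K (MonoidAlgebra K G ⊗[K] MonoidAlgebra K G) G (diagMonoidHom K G)).toLinearMap

/-- The standard counit of the group algebra `K[G]`. -/
noncomputable def groupCounit (K : Type u) [Field K] (G : Type u) [CommGroup G] :
    MonoidAlgebra K G →ₗ[K] K :=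
  (MonoidAlgebra.lift K K G (1 : G →* K)).toLinearMap

/-- A bialgebra homomorphism from a commutative `K`-bialgebra `B` to the group algebra
`K[G]` with its standard Hopf algebra structure. -/
structure BialgHomToGroupAlgebra (K : Type u) [Field K] (G : Type u) [CommGroup G]
    (B : Type u) [CommRing B] [Bialgebra K B] : Type u where
  toAlgHom : B →ₐ[K] MonoidAlgebra K G
  counit_comp : ∀ b : B, groupCounit K G (toAlgHom b) = Coalgebra.counit (R := K) (A := B) b
  comul_comp : ∀ b : B, groupComul K G (toAlgHom b) =
    TensorProduct.map toAlgHom.toLinearMap toAlgHom.toLinearMap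
      (Coalgebra.comul (R := K) (A := B) b)

/-- The `σ`-homogeneous component `{ x | (Φ ⊗ id)(η x) = σ ⊗ x }` of the grading of `g`
associated to `Φ : B → K[G]`. -/
noncomputable def lieGrade {K : Type u} [Field K] {G : Type u} [CommGroup G]
    {g : Type u} [LieRing g] [LieAlgebra K g]
    {B : Type u} [CommRing B] [Bialgebra K B]
    (η : g →ₗ⁅K⁆ B ⊗[K] g) (Φ : B →ₐ[K] MonoidAlgebra K G) (σ : G) : Submodule K g :=
  LinearMap.ker (LinearMap.rTensor g Φ.toLinearMap ∘ₗ η.toLinearMap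
    - TensorProduct.mk K (MonoidAlgebra K G) g (MonoidAlgebra.of K G σ))

/-- The convolution product `Φ₁ ⋆ Φ₂` of two `K`-algebra homomorphisms `B → K`. -/
noncomputable def conv {K : Type u} [Field K] {B : Type u} [CommRing B] [Bialgebra K B]
    (Φ₁ Φ₂ : B →ₐ[K] K) : B →ₗ[K] K :=
  LinearMap.mul' K K ∘ₗ TensorProduct.map Φ₁.toLinearMap Φ₂.toLinearMap ∘ₗ
    Coalgebra.comul (R := K) (A := B)

/-- `b ↦ Σ u(b₍₁₎) Φ(b₍₂₎) v(b₍₃₎)`: the conjugate of `Φ : B → K[G]` by the functionals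
`u, v : B → K`, as a linear map `B → K[G]`. -/
noncomputable def conjugateMap {K : Type u} [Field K] {G : Type u} [CommGroup G]
    {B : Type u} [CommRing B] [Bialgebra K B]
    (u v : B →ₐ[K] K) (Φ : B →ₐ[K] MonoidAlgebra K G) : B →ₗ[K] MonoidAlgebra K G :=
  (TensorProduct.rid K (MonoidAlgebra K G)).toLinearMap ∘ₗ
    LinearMap.rTensor K (TensorProduct.lid K (MonoidAlgebra K G)).toLinearMap ∘ₗ
    TensorProduct.map (TensorProduct.map u.toLinearMap Φ.toLinearMap) v.toLinearMap ∘ₗ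
    LinearMap.rTensor B (Coalgebra.comul (R := K) (A := B)) ∘ₗ
    Coalgebra.comul (R := K) (A := B)

/-!
A functional `w : B → K` acts on `g` by `ψ_w = (w ⊗ id) ∘ η`, and coassociativity of `η` gives
`ψ_{u ⋆ v} = ψ_v ∘ ψ_u`. For an algebra map `w` this is a Lie endomorphism, and universality of
`(B, η)` says every Lie endomorphism of `g` is `ψ_w` for exactly one algebra map `w`.

The `Φ`-grading is the decomposition of `g` into the homogeneous components of the `K[G]`-comodule
`ρ_Φ = (Φ ⊗ id) ∘ η`; since these components span `g`, an automorphism `φ` carries the `Φ`-grading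
onto the `Φ'`-grading iff `ρ_Φ' ∘ φ = (id ⊗ φ) ∘ ρ_Φ`. Writing `φ = ψ_v` and `φ⁻¹ = ψ_u`, the
right-hand side `(id ⊗ ψ_v) ∘ ρ_Φ ∘ ψ_u` is `((u ⋆ Φ ⋆ v) ⊗ id) ∘ η`, so by universality the
intertwining condition is exactly `Φ' = u ⋆ Φ ⋆ v`.
-/

open LinearMap WithConv

noncomputable section

section Coaction

variable {R C M : Type*} [CommRing R] [AddCommGroup C] [Module R C] [AddCommGroup M] [Module R M]

/-- The action `w ⇀ x = ∑ w(x₍₋₁₎) x₍₀₎` of the dual of `C` on a `C`-comodule `ρ`. -/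
def dualAct (ρ : M →ₗ[R] C ⊗[R] M) (w : C →ₗ[R] R) : M →ₗ[R] M :=
  TensorProduct.lid R M ∘ₗ rTensor M w ∘ₗ ρ

theorem rTensor_comp_coassoc {D : Type*} [AddCommGroup D] [Module R D] {ρ : M →ₗ[R] C ⊗[R] M}
    {δC : C →ₗ[R] C ⊗[R] C} {δD : D →ₗ[R] D ⊗[R] D} {f : C →ₗ[R] D}
    (hρ : rTensor M δC ∘ₗ ρ = (TensorProduct.assoc R C C M).symm ∘ₗ lTensor C ρ ∘ₗ ρ)
    (hf : δD ∘ₗ f = map f f ∘ₗ δC) :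
    rTensor M δD ∘ₗ rTensor M f ∘ₗ ρ =
      (TensorProduct.assoc R D D M).symm ∘ₗ lTensor D (rTensor M f ∘ₗ ρ) ∘ₗ rTensor M f ∘ₗ ρ := by
  have key : rTensor M (map f f) ∘ₗ (TensorProduct.assoc R C C M).symm.toLinearMap =
      (TensorProduct.assoc R D D M).symm.toLinearMap ∘ₗ lTensor D (rTensor M f) ∘ₗ
        rTensor (C ⊗[R] M) f := by
    ext c c' m; simp
  calc _ = rTensor M (map f f) ∘ₗ rTensor M δC ∘ₗ ρ := by
        rw [← comp_assoc, ← rTensor_comp, hf, rTensor_comp, comp_assoc]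
    _ = (TensorProduct.assoc R D D M).symm.toLinearMap ∘ₗ lTensor D (rTensor M f) ∘ₗ
        (rTensor (C ⊗[R] M) f ∘ₗ lTensor C ρ) ∘ₗ ρ := by
      rw [hρ, ← comp_assoc, key]; rfl
    _ = _ := by
      rw [rTensor_comp_lTensor, ← lTensor_comp_rTensor]
      simp only [lTensor_comp, comp_assoc]

variable [Coalgebra R C] {ρ : M →ₗ[R] C ⊗[R] M}
  (hρ : rTensor M Coalgebra.comul ∘ₗ ρ = (TensorProduct.assoc R C C M).symm ∘ₗ lTensor C ρ ∘ₗ ρ)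
include hρ

section ConvolutionWithScalars

variable {A : Type*} [Semiring A] [Algebra R A]

theorem rTensor_convMul_algebraMap_comp (f : C →ₗ[R] A) (v : C →ₗ[R] R) :
    rTensor M (toConv f * toConv (Algebra.linearMap R A ∘ₗ v)).ofConv ∘ₗ ρ =
      lTensor A (dualAct ρ v) ∘ₗ rTensor M f ∘ₗ ρ := by
  have key : rTensor M (mul' R A ∘ₗ map f (Algebra.linearMap R A ∘ₗ v)) ∘ₗ
      (TensorProduct.assoc R C C M).symm.toLinearMap =
      lTensor A (TensorProduct.lid R M ∘ₗ rTensor M v) ∘ₗ rTensor (C ⊗[R] M) f := by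
    ext c c' m
    simp [← Algebra.commutes, ← Algebra.smul_def, TensorProduct.smul_tmul']
  calc _ = rTensor M (mul' R A ∘ₗ map f (Algebra.linearMap R A ∘ₗ v)) ∘ₗ
        rTensor M Coalgebra.comul ∘ₗ ρ := by
        simp only [LinearMap.convMul_def, ofConv_toConv, rTensor_comp, comp_assoc]
    _ = lTensor A (TensorProduct.lid R M ∘ₗ rTensor M v) ∘ₗ
        (rTensor (C ⊗[R] M) f ∘ₗ lTensor C ρ) ∘ₗ ρ := by
      rw [hρ, ← comp_assoc, key]; rfl
    _ = _ := by
      rw [rTensor_comp_lTensor, ← lTensor_comp_rTensor]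
      simp only [dualAct, lTensor_comp, comp_assoc]

theorem rTensor_algebraMap_comp_convMul (u : C →ₗ[R] R) (f : C →ₗ[R] A) :
    rTensor M (toConv (Algebra.linearMap R A ∘ₗ u) * toConv f).ofConv ∘ₗ ρ =
      rTensor M f ∘ₗ ρ ∘ₗ dualAct ρ u := by
  have key : rTensor M (mul' R A ∘ₗ map (Algebra.linearMap R A ∘ₗ u) f) ∘ₗ
      (TensorProduct.assoc R C C M).symm.toLinearMap =
      rTensor M f ∘ₗ TensorProduct.lid R (C ⊗[R] M) ∘ₗ rTensor (C ⊗[R] M) u := by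
    ext c c' m
    simp [← Algebra.smul_def, TensorProduct.smul_tmul']
  have natural : TensorProduct.lid R (C ⊗[R] M) ∘ₗ rTensor (C ⊗[R] M) u ∘ₗ lTensor C ρ =
      ρ ∘ₗ TensorProduct.lid R M ∘ₗ rTensor M u := by
    ext c m; simp
  calc _ = rTensor M (mul' R A ∘ₗ map (Algebra.linearMap R A ∘ₗ u) f) ∘ₗ
        rTensor M Coalgebra.comul ∘ₗ ρ := by
        simp only [LinearMap.convMul_def, ofConv_toConv, rTensor_comp, comp_assoc]
    _ = rTensor M f ∘ₗ (TensorProduct.lid R (C ⊗[R] M) ∘ₗ rTensor (C ⊗[R] M) u ∘ₗ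
        lTensor C ρ) ∘ₗ ρ := by
      rw [hρ, ← comp_assoc, key]; rfl
    _ = _ := by rw [natural]; rfl

theorem rTensor_conjugate_comp (u v : C →ₗ[R] R) (f : C →ₗ[R] A) :
    rTensor M (toConv (Algebra.linearMap R A ∘ₗ u) * toConv f *
        toConv (Algebra.linearMap R A ∘ₗ v)).ofConv ∘ₗ ρ =
      lTensor A (dualAct ρ v) ∘ₗ rTensor M f ∘ₗ ρ ∘ₗ dualAct ρ u := by
  rw [rTensor_convMul_algebraMap_comp hρ, ofConv_toConv, rTensor_algebraMap_comp_convMul hρ]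

end ConvolutionWithScalars

theorem dualAct_convMul (u v : C →ₗ[R] R) :
    dualAct ρ (toConv u * toConv v).ofConv = dualAct ρ v ∘ₗ dualAct ρ u := by
  have natural : (TensorProduct.lid R M).toLinearMap ∘ₗ lTensor R (dualAct ρ v) =
      dualAct ρ v ∘ₗ TensorProduct.lid R M := by
    ext m; simp
  have h := rTensor_convMul_algebraMap_comp hρ u v
  rw [Algebra.linearMap_self, id_comp] at h
  rw [dualAct, h, ← comp_assoc, natural]
  rfl

end Coaction

section GroupAlgebraComodule

variable {K G : Type u} [Field K] [CommGroup G] {M N : Type*} [AddCommGroup M] [Module K M]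
  [AddCommGroup N] [Module K N]

def homogeneous (ρ : M →ₗ[K] MonoidAlgebra K G ⊗[K] M) (σ : G) : Submodule K M :=
  ker (ρ - TensorProduct.mk K (MonoidAlgebra K G) M (MonoidAlgebra.of K G σ))

theorem mem_homogeneous {ρ : M →ₗ[K] MonoidAlgebra K G ⊗[K] M} {σ : G} {x : M} :
    x ∈ homogeneous ρ σ ↔ ρ x = MonoidAlgebra.of K G σ ⊗ₜ x := by
  simp [homogeneous, sub_eq_zero]

theorem map_homogeneous_of_comp_eq {ρ : M →ₗ[K] MonoidAlgebra K G ⊗[K] M}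
    {ρ' : N →ₗ[K] MonoidAlgebra K G ⊗[K] N} (e : M ≃ₗ[K] N)
    (he : ρ' ∘ₗ e = lTensor (MonoidAlgebra K G) e ∘ₗ ρ) (σ : G) :
    (homogeneous ρ σ).map (e : M →ₗ[K] N) = homogeneous ρ' σ := by
  ext y
  have hy : ρ' y = lTensor (MonoidAlgebra K G) e (ρ (e.symm y)) := by
    simpa using congr($he (e.symm y))
  rw [Submodule.mem_map_equiv, mem_homogeneous, mem_homogeneous, hy,
    ← (LinearEquiv.lTensor (MonoidAlgebra K G) e).injective.eq_iff]
  simp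
  exact Iff.rfl

theorem comp_eq_of_map_homogeneous_le {ρ : M →ₗ[K] MonoidAlgebra K G ⊗[K] M}
    {ρ' : N →ₗ[K] MonoidAlgebra K G ⊗[K] N} (hρ : ⨆ σ, homogeneous ρ σ = ⊤) (e : M →ₗ[K] N)
    (he : ∀ σ, (homogeneous ρ σ).map e ≤ homogeneous ρ' σ) :
    ρ' ∘ₗ e = lTensor (MonoidAlgebra K G) e ∘ₗ ρ := by
  refine eqLocus_eq_top.mp (top_le_iff.mp (hρ ▸ iSup_le fun σ x hx ↦ ?_))
  have hex : e x ∈ homogeneous ρ' σ := he σ (Submodule.mem_map_of_mem hx)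
  rw [mem_homogeneous] at hx hex
  simp [mem_eqLocus, hx, hex]

def coeffFunctional (σ : G) : MonoidAlgebra K G →ₗ[K] K :=
  Finsupp.lapply σ ∘ₗ (MonoidAlgebra.coeffLinearEquiv K).toLinearMap

variable {ρ : M →ₗ[K] (MonoidAlgebra K G) ⊗[K] M}

theorem lid_rTensor_coeffFunctional_mem_homogeneous
    (hρ : rTensor M (groupComul K G) ∘ₗ ρ =
      (TensorProduct.assoc K (MonoidAlgebra K G) (MonoidAlgebra K G) M).symm ∘ₗ
        lTensor (MonoidAlgebra K G) ρ ∘ₗ ρ) (σ : G) (x : M) :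
    TensorProduct.lid K M (rTensor M (coeffFunctional σ) (ρ x)) ∈ homogeneous ρ σ := by
  have comul_coeff : (TensorProduct.lid K (MonoidAlgebra K G ⊗[K] M)).toLinearMap ∘ₗ
      rTensor _ (coeffFunctional σ) ∘ₗ
      (TensorProduct.assoc K (MonoidAlgebra K G) (MonoidAlgebra K G) M).toLinearMap ∘ₗ
      rTensor M (groupComul K G) =
      TensorProduct.mk K (MonoidAlgebra K G) M (MonoidAlgebra.of K G σ) ∘ₗ
        (TensorProduct.lid K M).toLinearMap ∘ₗ rTensor M (coeffFunctional σ) := by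
    ext τ m
    rcases eq_or_ne τ σ with rfl | hτσ <;>
      simp [groupComul, diagMonoidHom, coeffFunctional, *]
  have natural : (TensorProduct.lid K (MonoidAlgebra K G ⊗[K] M)).toLinearMap ∘ₗ
      rTensor _ (coeffFunctional σ) ∘ₗ lTensor (MonoidAlgebra K G) ρ =
      ρ ∘ₗ (TensorProduct.lid K M).toLinearMap ∘ₗ rTensor M (coeffFunctional σ) := by
    ext τ m; simp
  rw [mem_homogeneous]
  calc _ = TensorProduct.lid K (MonoidAlgebra K G ⊗[K] M) (rTensor _ (coeffFunctional σ)
        (lTensor (MonoidAlgebra K G) ρ (ρ x))) := congr($natural (ρ x)).symm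
    _ = TensorProduct.lid K (MonoidAlgebra K G ⊗[K] M) (rTensor _ (coeffFunctional σ)
        (TensorProduct.assoc K _ _ M (rTensor M (groupComul K G) (ρ x)))) := by
      rw [← comp_apply (rTensor M (groupComul K G)) ρ, hρ]; simp
    _ = _ := congr($comul_coeff (ρ x))

theorem iSup_homogeneous_eq_top
    (hcounit :
      (TensorProduct.lid K M).toLinearMap ∘ₗ rTensor M (groupCounit K G) ∘ₗ ρ = LinearMap.id)
    (hρ : rTensor M (groupComul K G) ∘ₗ ρ =
      (TensorProduct.assoc K (MonoidAlgebra K G) (MonoidAlgebra K G) M).symm ∘ₗ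
        lTensor (MonoidAlgebra K G) ρ ∘ₗ ρ) :
    ⨆ σ, homogeneous ρ σ = ⊤ := by
  classical
  let E : MonoidAlgebra K G ⊗[K] M →ₗ[K] G →₀ M :=
    (TensorProduct.finsuppScalarLeft K M G).toLinearMap ∘ₗ
      rTensor M (MonoidAlgebra.coeffLinearEquiv K).toLinearMap
  have hE (t : MonoidAlgebra K G ⊗[K] M) (σ : G) :
      E t σ = TensorProduct.lid K M (rTensor M (coeffFunctional σ) t) := by
    simp [E, coeffFunctional, rTensor_comp_apply, TensorProduct.finsuppScalarLeft_apply]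
  have counit_eq_sum : (TensorProduct.lid K M).toLinearMap ∘ₗ rTensor M (groupCounit K G) =
      Finsupp.lsum K (fun _ ↦ LinearMap.id) ∘ₗ E := by
    ext τ m
    simp [E, groupCounit, TensorProduct.finsuppScalarLeft_apply_tmul]
  refine eq_top_iff.mpr fun x _ ↦ ?_
  rw [show x = ((TensorProduct.lid K M).toLinearMap ∘ₗ rTensor M (groupCounit K G)) (ρ x) from
    congr($hcounit.symm x), counit_eq_sum, comp_apply, Finsupp.lsum_apply, Finsupp.sum]
  refine Submodule.sum_mem _ fun σ _ ↦ Submodule.mem_iSup_of_mem σ ?_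
  simpa [hE] using lid_rTensor_coeffFunctional_mem_homogeneous hρ σ x

end GroupAlgebraComodule

section LieBaseChange

variable {R L : Type*} [CommRing R] [LieRing L] [LieAlgebra R L]

def lidLieEquiv : R ⊗[R] L ≃ₗ⁅R⁆ L :=
  { TensorProduct.lid R L with
    map_lie' {s t} := by
      refine s.induction_on (by simp) (fun a x ↦ t.induction_on (by simp) (fun b y ↦ ?_)
        (fun _ _ h₁ h₂ ↦ by simp_all)) (fun _ _ h₁ h₂ ↦ by simp_all [add_lie])
      simp [smul_lie, lie_smul, smul_smul, mul_comm] }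

end LieBaseChange

section UniversalCoaction

variable {K : Type u} [Field K] {g A : Type u} [LieRing g] [LieAlgebra K g] [CommRing A]
  [Algebra K A]

theorem IsUniversalLiePair.algHom_ext {h : Type u} [LieRing h] [LieAlgebra K h]
    {η : h →ₗ⁅K⁆ A ⊗[K] g} (huniv : IsUniversalLiePair K g h A η)
    {C : Type u} [CommRing C] [Algebra K C] {Ψ₁ Ψ₂ : A →ₐ[K] C}
    (hΨ : rTensor g Ψ₁.toLinearMap ∘ₗ η.toLinearMap = rTensor g Ψ₂.toLinearMap ∘ₗ η.toLinearMap) :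
    Ψ₁ = Ψ₂ :=
  (huniv C ((LieAlgebra.ExtendScalars.map Ψ₁ (LieHom.id)).comp η)).unique (fun _ ↦ rfl)
    (fun x ↦ congr($hΨ x))

variable {η : g →ₗ⁅K⁆ A ⊗[K] g}

theorem IsUniversalLiePair.algHom_ext_of_dualAct (huniv : IsUniversalLiePair K g g A η)
    {u₁ u₂ : A →ₐ[K] K} (hu : dualAct η.toLinearMap u₁.toLinearMap = dualAct η u₂.toLinearMap) :
    u₁ = u₂ :=
  huniv.algHom_ext ((cancel_left (TensorProduct.lid K g).injective).mp hu)

theorem IsUniversalLiePair.exists_dualAct_eq (huniv : IsUniversalLiePair K g g A η)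
    (φ : g →ₗ⁅K⁆ g) : ∃ u : A →ₐ[K] K, dualAct η.toLinearMap u.toLinearMap = φ := by
  obtain ⟨u, hu, -⟩ := huniv K (lidLieEquiv.symm.toLieHom.comp φ)
  exact ⟨u, LinearMap.ext fun x ↦
    (congrArg (TensorProduct.lid K g) (hu x)).symm.trans (lidLieEquiv.apply_symm_apply (φ x))⟩

def dualActLieHom (η : g →ₗ⁅K⁆ A ⊗[K] g) (v : A →ₐ[K] K) : g →ₗ⁅K⁆ g :=
  lidLieEquiv.toLieHom.comp ((LieAlgebra.ExtendScalars.map v LieHom.id).comp η)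

end UniversalCoaction

section Conjugation

variable {K : Type u} [Field K] {B A : Type u} [CommRing B] [Bialgebra K B] [CommRing A]
  [Algebra K A]

def conjugateAlgHom (u v : B →ₐ[K] K) (Φ : B →ₐ[K] A) : B →ₐ[K] A :=
  (toConv ((Algebra.ofId K A).comp u) * toConv Φ * toConv ((Algebra.ofId K A).comp v)).ofConv

theorem conjugateMap_eq_conjugateAlgHom {G : Type u} [CommGroup G] (u v : B →ₐ[K] K)
    (Φ : B →ₐ[K] MonoidAlgebra K G) : conjugateMap u v Φ = (conjugateAlgHom u v Φ).toLinearMap := by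
  have key : (TensorProduct.rid K (MonoidAlgebra K G)).toLinearMap ∘ₗ
      rTensor K (TensorProduct.lid K (MonoidAlgebra K G)).toLinearMap ∘ₗ
      map (map u.toLinearMap Φ.toLinearMap) v.toLinearMap =
      mul' K (MonoidAlgebra K G) ∘ₗ map (mul' K (MonoidAlgebra K G) ∘ₗ
        map ((Algebra.ofId K _).comp u).toLinearMap Φ.toLinearMap)
        ((Algebra.ofId K _).comp v).toLinearMap := by
    ext a b c
    simp [Algebra.smul_def, mul_comm, mul_left_comm]
  refine (congrArg (· ∘ₗ rTensor B Coalgebra.comul ∘ₗ Coalgebra.comul) key).trans ?_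
  rw [comp_assoc, ← comp_assoc _ _ (map _ _), map_comp_rTensor]
  rfl

variable {g : Type u} [LieRing g] [LieAlgebra K g] {η : g →ₗ⁅K⁆ B ⊗[K] g}

theorem rTensor_conjugateAlgHom_comp
    (hη : rTensor g Coalgebra.comul ∘ₗ η.toLinearMap =
      (TensorProduct.assoc K B B g).symm ∘ₗ lTensor B η.toLinearMap ∘ₗ η.toLinearMap)
    (u v : B →ₐ[K] K) (Φ : B →ₐ[K] A) :
    rTensor g (conjugateAlgHom u v Φ).toLinearMap ∘ₗ η.toLinearMap =
      lTensor A (dualAct η.toLinearMap v.toLinearMap) ∘ₗ rTensor g Φ.toLinearMap ∘ₗ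
        η.toLinearMap ∘ₗ dualAct η.toLinearMap u.toLinearMap :=
  rTensor_conjugate_comp hη u.toLinearMap v.toLinearMap Φ.toLinearMap

end Conjugation

section ConjugateGradings

variable {K : Type u} [Field K] {g B A : Type u} [LieRing g] [LieAlgebra K g] [CommRing B]
  [Bialgebra K B] [CommRing A] [Algebra K A] {η : g →ₗ⁅K⁆ B ⊗[K] g}
  (hcounit : dualAct η.toLinearMap Coalgebra.counit = LinearMap.id)
  (hη : rTensor g Coalgebra.comul ∘ₗ η.toLinearMap =
    (TensorProduct.assoc K B B g).symm ∘ₗ lTensor B η.toLinearMap ∘ₗ η.toLinearMap)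
include hcounit hη

omit hcounit in
theorem dualAct_convMul_algHom (u v : B →ₐ[K] K) :
    dualAct η.toLinearMap (toConv u * toConv v).ofConv.toLinearMap =
      dualAct η.toLinearMap v.toLinearMap ∘ₗ dualAct η.toLinearMap u.toLinearMap :=
  dualAct_convMul hη u.toLinearMap v.toLinearMap

theorem dualAct_comp_eq_id_of_convMul_eq_one {u v : B →ₐ[K] K}
    (huv : toConv u * toConv v = 1) :
    dualAct η.toLinearMap v.toLinearMap ∘ₗ dualAct η.toLinearMap u.toLinearMap = LinearMap.id := by
  rw [← dualAct_convMul_algHom hη, huv]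
  exact hcounit

theorem IsUniversalLiePair.convMul_eq_one_of_dualAct_comp_eq_id
    (huniv : IsUniversalLiePair K g g B η) {u v : B →ₐ[K] K}
    (huv : dualAct η.toLinearMap v.toLinearMap ∘ₗ dualAct η.toLinearMap u.toLinearMap =
      LinearMap.id) :
    toConv u * toConv v = 1 :=
  ofConv_injective <| huniv.algHom_ext_of_dualAct <| by
    rw [dualAct_convMul_algHom hη, huv]
    exact hcounit.symm

theorem IsUniversalLiePair.exists_conjugate_of_comp_eq (huniv : IsUniversalLiePair K g g B η)
    {Φ Φ' : B →ₐ[K] A} (φ : g ≃ₗ⁅K⁆ g)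
    (hφ : rTensor g Φ'.toLinearMap ∘ₗ η.toLinearMap ∘ₗ φ.toLinearEquiv.toLinearMap =
      lTensor A φ.toLinearEquiv.toLinearMap ∘ₗ rTensor g Φ.toLinearMap ∘ₗ η.toLinearMap) :
    ∃ u v : B →ₐ[K] K, toConv u * toConv v = 1 ∧ toConv v * toConv u = 1 ∧
      Φ' = conjugateAlgHom u v Φ := by
  obtain ⟨u, hu⟩ := huniv.exists_dualAct_eq φ.symm.toLieHom
  obtain ⟨v, hv⟩ := huniv.exists_dualAct_eq φ.toLieHom
  refine ⟨u, v, huniv.convMul_eq_one_of_dualAct_comp_eq_id hcounit hη ?_,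
    huniv.convMul_eq_one_of_dualAct_comp_eq_id hcounit hη ?_, huniv.algHom_ext ?_⟩
  · rw [hu, hv]; ext x; simp
  · rw [hu, hv]; ext x; simp
  · rw [rTensor_conjugateAlgHom_comp hη, hu, hv]
    ext x
    have h := congr($hφ (φ.symm x))
    simp only [comp_apply, LinearEquiv.coe_coe, LieEquiv.coe_toLinearEquiv,
      LieEquiv.apply_symm_apply] at h
    exact h

theorem exists_lieEquiv_comp_eq_of_conjugate {u v : B →ₐ[K] K}
    (huv : toConv u * toConv v = 1) (hvu : toConv v * toConv u = 1) (Φ : B →ₐ[K] A) :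
    ∃ φ : g ≃ₗ⁅K⁆ g,
      rTensor g (conjugateAlgHom u v Φ).toLinearMap ∘ₗ η.toLinearMap ∘ₗ
          φ.toLinearEquiv.toLinearMap =
        lTensor A φ.toLinearEquiv.toLinearMap ∘ₗ rTensor g Φ.toLinearMap ∘ₗ η.toLinearMap := by
  have hvu' := dualAct_comp_eq_id_of_convMul_eq_one hcounit hη huv
  have huv' := dualAct_comp_eq_id_of_convMul_eq_one hcounit hη hvu
  refine ⟨{ dualActLieHom η v with
    invFun := dualAct η.toLinearMap u.toLinearMap
    left_inv := LinearMap.congr_fun huv'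
    right_inv := LinearMap.congr_fun hvu' }, ?_⟩
  rw [← comp_assoc, rTensor_conjugateAlgHom_comp hη]
  ext x
  exact congrArg (fun y ↦ lTensor A (dualAct η.toLinearMap v.toLinearMap)
    (rTensor g Φ.toLinearMap (η y))) (LinearMap.congr_fun huv' x)

end ConjugateGradings

section LieCoaction

variable {K : Type u} [Field K] {g B : Type u} [LieRing g] [LieAlgebra K g] [CommRing B]
  [Bialgebra K B] {η : g →ₗ⁅K⁆ B ⊗[K] g}

theorem IsLieCoaction.dualAct_counit (hη : IsLieCoaction K g B η) :
    dualAct η.toLinearMap Coalgebra.counit = LinearMap.id :=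
  LinearMap.ext hη.1

theorem IsLieCoaction.rTensor_comul_comp (hη : IsLieCoaction K g B η) :
    rTensor g Coalgebra.comul ∘ₗ η.toLinearMap =
      (TensorProduct.assoc K B B g).symm ∘ₗ lTensor B η.toLinearMap ∘ₗ η.toLinearMap :=
  LinearMap.ext hη.2

theorem IsLieCoaction.iSup_lieGrade_eq_top {G : Type u} [CommGroup G] (hη : IsLieCoaction K g B η)
    (Φ : BialgHomToGroupAlgebra K G B) : ⨆ σ, lieGrade η Φ.toAlgHom σ = ⊤ := by
  refine iSup_homogeneous_eq_top ?_ (rTensor_comp_coassoc hη.rTensor_comul_comp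
    (LinearMap.ext Φ.comul_comp))
  have hΦ : groupCounit K G ∘ₗ Φ.toAlgHom.toLinearMap = Coalgebra.counit :=
    LinearMap.ext Φ.counit_comp
  rw [← hη.dualAct_counit, dualAct, ← hΦ, rTensor_comp]
  rfl

end LieCoaction

end

theorem gradings_isomorphic_iff_conjugate_general
    (K : Type u) [Field K]
    (G : Type u) [CommGroup G]
    (g : Type u) [LieRing g] [LieAlgebra K g]
    (B : Type u) [CommRing B] [Bialgebra K B]
    (η : g →ₗ⁅K⁆ B ⊗[K] g)
    (hcoact : IsLieCoaction K g B η)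
    (huniv : IsUniversalLiePair K g g B η)
    (Φ Φ' : BialgHomToGroupAlgebra K G B) :
    (∃ φ : g ≃ₗ⁅K⁆ g, ∀ σ : G,
      Submodule.map (φ : g →ₗ⁅K⁆ g).toLinearMap (lieGrade η Φ.toAlgHom σ)
        = lieGrade η Φ'.toAlgHom σ) ↔
    (∃ u v : B →ₐ[K] K,
      (∀ b : B, conv u v b = Bialgebra.counitAlgHom K B b) ∧
      (∀ b : B, conv v u b = Bialgebra.counitAlgHom K B b) ∧
      ∀ b : B, Φ'.toAlgHom b = conjugateMap u v Φ.toAlgHom b) := by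
  have hconv (u v : B →ₐ[K] K) :
      (∀ b, conv u v b = Bialgebra.counitAlgHom K B b) ↔ toConv u * toConv v = 1 :=
    ⟨fun h ↦ ofConv_injective (AlgHom.ext h), fun h b ↦ congr(ofConv $h b)⟩
  have hconj (u v : B →ₐ[K] K) :
      (∀ b, Φ'.toAlgHom b = conjugateMap u v Φ.toAlgHom b) ↔
        Φ'.toAlgHom = conjugateAlgHom u v Φ.toAlgHom := by
    simp [conjugateMap_eq_conjugateAlgHom, AlgHom.ext_iff]
  have hcounit := hcoact.dualAct_counit
  have hη := hcoact.rTensor_comul_comp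
  constructor
  · rintro ⟨φ, hφ⟩
    obtain ⟨u, v, huv, hvu, hΦ'⟩ := huniv.exists_conjugate_of_comp_eq hcounit hη φ
      (comp_eq_of_map_homogeneous_le (hcoact.iSup_lieGrade_eq_top Φ) _ fun σ ↦ (hφ σ).le)
    exact ⟨u, v, (hconv u v).2 huv, (hconv v u).2 hvu, (hconj u v).2 hΦ'⟩
  · rintro ⟨u, v, huv, hvu, hΦ'⟩
    obtain ⟨φ, hφ⟩ := exists_lieEquiv_comp_eq_of_conjugate hcounit hη ((hconv u v).1 huv)
      ((hconv v u).1 hvu) Φ.toAlgHom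
    rw [← (hconj u v).1 hΦ'] at hφ
    exact ⟨φ, map_homogeneous_of_comp_eq φ.toLinearEquiv hφ⟩

theorem gradings_isomorphic_iff_conjugate
    (K : Type u) [Field K] [CharZero K]
    (G : Type u) [CommGroup G]
    (g : Type u) [LieRing g] [LieAlgebra K g] [FiniteDimensional K g]
    (B : Type u) [CommRing B] [Bialgebra K B]
    (η : g →ₗ⁅K⁆ B ⊗[K] g)
    (hcoact : IsLieCoaction K g B η)
    (huniv : IsUniversalLiePair K g g B η)
    (Φ Φ' : BialgHomToGroupAlgebra K G B) :
    (∃ φ : g ≃ₗ⁅K⁆ g, ∀ σ : G,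
      Submodule.map (φ : g →ₗ⁅K⁆ g).toLinearMap (lieGrade η Φ.toAlgHom σ)
        = lieGrade η Φ'.toAlgHom σ) ↔
    (∃ u v : B →ₐ[K] K,
      (∀ b : B, conv u v b = Bialgebra.counitAlgHom K B b) ∧
      (∀ b : B, conv v u b = Bialgebra.counitAlgHom K B b) ∧
      ∀ b : B, Φ'.toAlgHom b = conjugateMap u v Φ.toAlgHom b) :=
  gradings_isomorphic_iff_conjugate_general K G g B η hcoact huniv Φ Φ'
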